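/- Let G be an abelian group, φ : G → G a group endomorphism, and k a positive integer. If a subgroup H of G is φ-inert, then H is φ^k-inert. -/

import Mathlib

open Filter Topology ENNReal

variable {G : Type*}

/-- The `n`-th partial `φ`-trajectory of a subgroup `H`:
`T_n(φ,H) = H + φ(H) + ... + φ^{n-1}(H)`. -/
noncomputable def traj [AddCommGroup G] (φ : AddMonoid.End G) (H : AddSubgroup G) (n : ℕ) :
    AddSubgroup G :=
  ⨆ i ∈ Finset.range n, H.map (φ ^ i)

/-- `H` is `φ`-inert if `(H + φ(H))/H` is finite. -/
def IsInert [AddCommGroup G] (φ : AddMonoid.End G) (H : AddSubgroup G) : Prop :=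
  Finite (↥(H ⊔ H.map φ) ⧸ H.addSubgroupOf (H ⊔ H.map φ))

/-- The sequence `n ↦ log |T_n(φ,H)/H| / n`. -/
noncomputable def entFun [AddCommGroup G] (φ : AddMonoid.End G) (H : AddSubgroup G) (n : ℕ) : ℝ :=
  Real.log (Nat.card (↥(traj φ H n) ⧸ H.addSubgroupOf (traj φ H n))) / n

/-- The intrinsic entropy of `φ` with respect to `H`: the limit of `entFun φ H`. -/
noncomputable def entWrt [AddCommGroup G] (φ : AddMonoid.End G) (H : AddSubgroup G) : ℝ :=
  limUnder atTop (entFun φ H)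

/-- The intrinsic algebraic entropy of `φ`. -/
noncomputable def intrinsicEnt [AddCommGroup G] (φ : AddMonoid.End G) : ℝ≥0∞ :=
  ⨆ (H : AddSubgroup G) (_ : IsInert φ H), ENNReal.ofReal (entWrt φ H)

/-- The `φ`-trajectory of `H`: `T(φ,H) = ⋃_{n ≥ 1} T_n(φ,H)`. -/
noncomputable def trajAll [AddCommGroup G] (φ : AddMonoid.End G) (H : AddSubgroup G) :
    AddSubgroup G :=
  ⨆ n : ℕ, traj φ H (n + 1)


section Aux

variable [AddCommGroup G] (φ : AddMonoid.End G) (H : AddSubgroup G)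

private lemma relIndex_ne_zero_iff' (H K : AddSubgroup G) :
    H.relIndex K ≠ 0 ↔ Finite (K ⧸ H.addSubgroupOf K) := by
  rw [AddSubgroup.relIndex, AddSubgroup.index, Nat.card_ne_zero]
  exact ⟨fun h => h.2, fun h => ⟨⟨0⟩, h⟩⟩

private lemma aux_step (A B : AddSubgroup G) (hA : A.map φ ≤ B) (h : A.relIndex B ≠ 0) :
    B.relIndex (B ⊔ B.map φ) ≠ 0 := by
  set C := B ⊔ B.map φ with hC
  rw [relIndex_ne_zero_iff'] at h ⊢
  have hBC : B.map φ ≤ C := le_sup_right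
  let f : B →+ C := AddMonoidHom.codRestrict ((φ : G →+ G).comp B.subtype) C
    (fun x => hBC (AddSubgroup.mem_map_of_mem φ x.2))
  let g : B →+ C ⧸ B.addSubgroupOf C := (QuotientAddGroup.mk' (B.addSubgroupOf C)).comp f
  have hker : ∀ a ∈ A.addSubgroupOf B, g a = 0 := by
    intro a ha
    have : φ (a : G) ∈ B := hA (AddSubgroup.mem_map_of_mem φ ha)
    exact (QuotientAddGroup.eq_zero_iff _).mpr this
  have hsurj : Function.Surjective (QuotientAddGroup.lift (A.addSubgroupOf B) g hker) := by
    intro q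
    obtain ⟨⟨c, hc⟩, rfl⟩ := QuotientAddGroup.mk_surjective q
    rw [hC, AddSubgroup.mem_sup] at hc
    obtain ⟨b, hb, z, hz, hbz⟩ := hc
    obtain ⟨b', hb', rfl⟩ := hz
    subst hbz
    refine ⟨QuotientAddGroup.mk ⟨b', hb'⟩, ?_⟩
    have : (QuotientAddGroup.lift (A.addSubgroupOf B) g hker) (QuotientAddGroup.mk ⟨b', hb'⟩)
        = QuotientAddGroup.mk (f ⟨b', hb'⟩) := rfl
    rw [this]
    apply (QuotientAddGroup.eq (s := B.addSubgroupOf C)).mpr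
    show -(φ b') + (b + φ b') ∈ B
    have heq : -(φ b') + (b + φ b') = b := by abel
    rw [heq]; exact hb
  exact Finite.of_surjective _ hsurj

private lemma map_pow_succ (i : ℕ) : (H.map (φ ^ i)).map φ = H.map (φ ^ (i + 1)) := by
  ext x
  constructor
  · rintro ⟨y, ⟨z, hz, rfl⟩, rfl⟩
    exact ⟨z, hz, (congrArg (fun f : AddMonoid.End G => f z) (pow_succ' φ i)).trans rfl⟩
  · rintro ⟨z, hz, rfl⟩
    exact ⟨(φ ^ i) z, ⟨z, hz, rfl⟩,
      ((congrArg (fun f : AddMonoid.End G => f z) (pow_succ' φ i)).trans rfl).symm⟩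

private lemma le_traj {i n : ℕ} (h : i < n) : H.map (φ ^ i) ≤ traj φ H n := by
  refine le_trans ?_ (le_iSup _ i)
  exact le_iSup (fun _ : i ∈ Finset.range n => H.map (φ ^ i)) (Finset.mem_range.2 h)

private lemma traj_succ (n : ℕ) : traj φ H (n + 1) = traj φ H n ⊔ H.map (φ ^ n) := by
  rw [traj, traj, Finset.range_add_one, Finset.iSup_insert, sup_comm]

private lemma traj_mono {m n : ℕ} (h : m ≤ n) : traj φ H m ≤ traj φ H n := by
  refine iSup₂_le fun i hi => le_traj φ H ?_
  exact lt_of_lt_of_le (Finset.mem_range.1 hi) h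

private lemma map_one_eq : H.map (φ ^ 0) = H := by
  have h1 : (1 : AddMonoid.End G) = AddMonoidHom.id G := rfl
  ext x
  constructor
  · rintro ⟨y, hy, rfl⟩
    have e := congrArg (fun f : AddMonoid.End G => f y) (pow_zero φ)
    exact cast (congrArg (· ∈ H) e.symm) hy
  · intro hx
    exact ⟨x, hx, (congrArg (fun f : AddMonoid.End G => f x) (pow_zero φ)).trans rfl⟩

private lemma H_le_traj (n : ℕ) : H ≤ traj φ H (n + 1) := by
  have h0 := le_traj φ H (Nat.succ_pos n) (i := 0)
  exact le_of_eq_of_le (map_one_eq φ H).symm h0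

private lemma map_traj_le (n : ℕ) : (traj φ H (n + 1)).map φ ≤ traj φ H (n + 2) := by
  refine AddSubgroup.map_le_iff_le_comap.mpr ?_
  refine iSup₂_le fun i hi => ?_
  refine AddSubgroup.map_le_iff_le_comap.mp ?_
  rw [map_pow_succ]
  have := Finset.mem_range.1 hi
  exact le_traj φ H (by omega)

private lemma traj_eq (n : ℕ) :
    traj φ H (n + 2) = traj φ H (n + 1) ⊔ (traj φ H (n + 1)).map φ := by
  refine le_antisymm ?_ (sup_le (traj_mono φ H (by omega)) (map_traj_le φ H n))
  rw [traj_succ]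
  refine sup_le le_sup_left ?_
  rw [← map_pow_succ]
  exact (AddSubgroup.map_mono (le_traj φ H (Nat.lt_succ_self n))).trans le_sup_right

private lemma traj_one : traj φ H 1 = H := by
  have h0 : traj φ H 0 = ⊥ := by simp [traj]
  rw [traj_succ, h0, bot_sup_eq]; exact map_one_eq φ H

private lemma traj_two : traj φ H 2 = H ⊔ H.map φ := by
  rw [traj_succ, traj_one, pow_one]

end Aux

/-- If `H` is `φ`-inert then `H` is `φ^k`-inert for every `k ≥ 1`. -/
theorem isInert_pow [AddCommGroup G] (φ : AddMonoid.End G) (k : ℕ) (hk : 0 < k)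
    (H : AddSubgroup G) (hH : IsInert φ H) :
    IsInert (φ ^ k) H := by
  have hbase : H.relIndex (H ⊔ H.map φ) ≠ 0 := (relIndex_ne_zero_iff' _ _).mpr hH
  have key : ∀ n, (traj φ H (n + 1)).relIndex (traj φ H (n + 2)) ≠ 0 := by
    intro n
    induction n with
    | zero => rw [traj_one, traj_two]; exact hbase
    | succ n ih =>
        have h2 := aux_step φ (traj φ H (n + 1)) (traj φ H (n + 2)) (map_traj_le φ H n) ih
        rwa [← traj_eq] at h2
  have main : ∀ n, H.relIndex (traj φ H (n + 1)) ≠ 0 := by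
    intro n
    induction n with
    | zero => rw [traj_one]; simp [AddSubgroup.relIndex_self]
    | succ n ih => exact AddSubgroup.relIndex_ne_zero_trans ih (key n)
  have hle : H ⊔ H.map (φ ^ k) ≤ traj φ H (k + 1) :=
    sup_le (H_le_traj φ H k) (le_traj φ H (Nat.lt_succ_self k))
  exact (relIndex_ne_zero_iff' _ _).mp
    (fun h0 => main k (AddSubgroup.relIndex_eq_zero_of_le_right hle h0))
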